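/- arXiv:1102.5415 — 4 statements merged into one kernel-verified Lean document; each statement's English description precedes it below -/
import Mathlib

section
/- For any random variables X and W and any s > 0, the probability over w drawn from W that the min-entropy of X conditioned on W = w is at least the average conditional min-entropy of X given W minus s, is at least 1 - 2^{-s}. -/
open Finset
open scoped Classical

/-- For any random variables X and W (joint distribution `p`) and any s > 0,
the probability over w drawn from W that the min-entropy of X conditioned on W = w is at
least the average conditional min-entropy of X given W minus s, is at least 1 - 2^{-s}.
The condition H∞(X|W=w) ≥ H̃∞(X|W) - s is expressed equivalently as
max_a Pr[X=a, W=w] ≤ 2^{-(H̃∞(X|W) - s)} · Pr[W=w]. -/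
theorem stmt_0 {α β : Type*} [Fintype α] [Fintype β] [Nonempty α] [Nonempty β]
    (p : α × β → ℝ) (hp : ∀ z, 0 ≤ p z) (hsum : ∑ z, p z = 1) (s : ℝ) (hs : 0 < s) :
    (1 : ℝ) - 2 ^ (-s) ≤
      ∑ w ∈ Finset.univ.filter
        (fun w : β => (⨆ a, p (a, w)) ≤
          (2 : ℝ) ^ (-((-Real.logb 2 (∑ w', ⨆ a, p (a, w'))) - s)) * (∑ a, p (a, w))),
        (∑ a, p (a, w)) := by
  have hSle : ∀ (w : β) (a : α), p (a, w) ≤ ⨆ a, p (a, w) := fun w a =>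
    le_ciSup (f := fun a => p (a, w)) (Set.Finite.bddAbove (Set.finite_range _)) a
  set S : β → ℝ := fun w => ⨆ a, p (a, w) with hSdef
  set T : β → ℝ := fun w => ∑ a, p (a, w) with hTdef
  have hS0 : ∀ w, 0 ≤ S w := fun w => le_trans (hp _) (hSle w (Classical.arbitrary α))
  have hT0 : ∀ w, 0 ≤ T w := fun w => Finset.sum_nonneg fun a _ => hp _
  have hTsum : ∑ w, T w = 1 := by
    rw [← hsum, Fintype.sum_prod_type]
    exact Finset.sum_comm
  set M : ℝ := ∑ w', S w' with hMdef
  have hMpos : 0 < M := by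
    have hcard : (0:ℝ) < Fintype.card α := by
      exact_mod_cast Fintype.card_pos
    have h1 : (1:ℝ) ≤ (Fintype.card α : ℝ) * M := by
      rw [hMdef, Finset.mul_sum, ← hTsum]
      refine Finset.sum_le_sum fun w _ => ?_
      calc T w = ∑ a : α, p (a, w) := rfl
        _ ≤ ∑ _a : α, S w := Finset.sum_le_sum fun a _ => hSle w a
        _ = (Fintype.card α : ℝ) * S w := by
            rw [Finset.sum_const, Finset.card_univ, nsmul_eq_mul]
    by_contra h
    push_neg at h
    nlinarith
  have hrw : (2:ℝ) ^ (-((-Real.logb 2 M) - s)) = M * 2 ^ s := by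
    have he : -((-Real.logb 2 M) - s) = Real.logb 2 M + s := by ring
    rw [he, Real.rpow_add (by norm_num), Real.rpow_logb (by norm_num) (by norm_num) hMpos]
  set c : ℝ := (2:ℝ) ^ (-((-Real.logb 2 M) - s)) with hcdef
  have hcpos : 0 < c := by rw [hrw]; positivity
  -- split sum into good and bad
  have hsplit := Finset.sum_filter_add_sum_filter_not Finset.univ
    (fun w : β => S w ≤ c * T w) T
  have hbad : ∑ w ∈ Finset.univ.filter (fun w : β => ¬ (S w ≤ c * T w)), T w
      ≤ 2 ^ (-s) := by
    have h1 : c * ∑ w ∈ Finset.univ.filter (fun w : β => ¬ (S w ≤ c * T w)), T w ≤ M := by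
      rw [Finset.mul_sum]
      calc ∑ w ∈ Finset.univ.filter (fun w : β => ¬ (S w ≤ c * T w)), c * T w
          ≤ ∑ w ∈ Finset.univ.filter (fun w : β => ¬ (S w ≤ c * T w)), S w := by
            refine Finset.sum_le_sum fun w hw => ?_
            simp only [Finset.mem_filter] at hw
            exact le_of_lt (lt_of_not_ge hw.2)
        _ ≤ ∑ w', S w' :=
            Finset.sum_le_sum_of_subset_of_nonneg (Finset.filter_subset _ _)
              (fun w _ _ => hS0 w)
    have h2 : M / c = 2 ^ (-s) := by
      rw [hrw, Real.rpow_neg (by norm_num)]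
      field_simp
    calc ∑ w ∈ Finset.univ.filter (fun w : β => ¬ (S w ≤ c * T w)), T w
        ≤ M / c := (le_div_iff₀' hcpos).mpr h1
      _ = 2 ^ (-s) := h2
  have : (1:ℝ) - 2 ^ (-s) ≤ ∑ w ∈ Finset.univ.filter (fun w : β => S w ≤ c * T w), T w := by
    rw [← hTsum] at *
    linarith
  exact this
end

section
/- If a random variable B takes at most 2^ℓ possible values, then the average conditional min-entropy of A given B is at least the min-entropy of A minus ℓ, i.e., H̃_∞(A|B) ≥ H_∞(A) - ℓ. -/
/-!
Bounding each `max_a Pr[A = a, B = b]` by `max_a Pr[A = a] = 2^(-H∞(A))` and summing over the at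
most `2^ℓ` values `b` that `B` takes with positive probability gives
`2^(-H̃∞(A|B)) = ∑_b max_a Pr[A = a, B = b] ≤ 2^ℓ · 2^(-H∞(A))`; taking `-log₂` yields the claim.
-/

open Finset
open scoped Classical

section JointDistribution

variable {α β : Type*} [Fintype α] {p : α × β → ℝ}

theorem iSup_le_iSup_sum [Fintype β] (hp : ∀ z, 0 ≤ p z) (b : β) :
    ⨆ a, p (a, b) ≤ ⨆ a, ∑ b, p (a, b) :=
  Real.iSup_le
    (fun a => (single_le_sum (fun b _ => hp (a, b)) (mem_univ b)).trans
      (le_ciSup (f := fun a => ∑ b, p (a, b)) (Finite.bddAbove_range _) a))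
    (Real.iSup_nonneg fun a => sum_nonneg fun b _ => hp (a, b))

theorem iSup_eq_zero_of_sum_nonpos (hp : ∀ z, 0 ≤ p z) {b : β} (hb : ∑ a, p (a, b) ≤ 0) :
    ⨆ a, p (a, b) = 0 := by
  have hzero : ∀ a, p (a, b) = 0 := fun a =>
    (sum_eq_zero_iff_of_nonneg fun a _ => hp (a, b)).mp
      (hb.antisymm (sum_nonneg fun a _ => hp (a, b))) a (mem_univ a)
  simp only [hzero, Real.iSup_const_zero]

theorem sum_iSup_le_card_mul_iSup_sum [Fintype β] (hp : ∀ z, 0 ≤ p z) :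
    ∑ b, ⨆ a, p (a, b) ≤
      #(univ.filter fun b : β => 0 < ∑ a, p (a, b)) * ⨆ a, ∑ b, p (a, b) := by
  rw [← sum_filter_of_ne (p := fun b : β => 0 < ∑ a, p (a, b)) fun b _ hb => ?_,
    ← nsmul_eq_mul, ← sum_const]
  · exact sum_le_sum fun b _ => iSup_le_iSup_sum hp b
  · by_contra hneg
    exact hb (iSup_eq_zero_of_sum_nonpos hp (not_lt.mp hneg))

theorem sum_iSup_pos [Fintype β] (hp : ∀ z, 0 ≤ p z) (htotal : 0 < ∑ z, p z) :
    0 < ∑ b, ⨆ a, p (a, b) := by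
  obtain ⟨⟨a₀, b₀⟩, hpos⟩ : ∃ z, 0 < p z := by
    by_contra! h
    exact htotal.not_ge (sum_nonpos fun z _ => h z)
  calc 0 < p (a₀, b₀) := hpos
    _ ≤ ⨆ a, p (a, b₀) := le_ciSup (f := fun a => p (a, b₀)) (Finite.bddAbove_range _) a₀
    _ ≤ ∑ b, ⨆ a, p (a, b) :=
      single_le_sum (fun b _ => Real.iSup_nonneg fun a => hp (a, b)) (mem_univ b₀)

end JointDistribution

theorem neg_logb_sub_le_neg_logb_of_le_two_pow_mul {x m : ℝ} {ℓ : ℕ} (hx : 0 < x)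
    (hxm : x ≤ 2 ^ ℓ * m) : -Real.logb 2 m - ℓ ≤ -Real.logb 2 x := by
  have hm : 0 < m := pos_of_mul_pos_right (hx.trans_le hxm) (by positivity)
  have hlog : Real.logb 2 x ≤ Real.logb 2 (2 ^ ℓ * m) :=
    Real.logb_le_logb_of_le (by norm_num) hx hxm
  rw [Real.logb_mul (by positivity) hm.ne', Real.logb_pow, Real.logb_self_eq_one (by norm_num)]
    at hlog
  linarith

/-- With `p` the joint law of `(A, B)`, `∑ b, ⨆ a, p (a, b) = E_b[max_a Pr[A = a | B = b]]`. -/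
theorem stmt_1_general {α β : Type*} [Fintype α] [Fintype β]
    (p : α × β → ℝ) (hp : ∀ z, 0 ≤ p z) (hsum : ∑ z, p z = 1) (ℓ : ℕ)
    (hcard : (Finset.univ.filter (fun b : β => 0 < ∑ a, p (a, b))).card ≤ 2 ^ ℓ) :
    -Real.logb 2 (⨆ a, ∑ b, p (a, b)) - (ℓ : ℝ) ≤
      -Real.logb 2 (∑ b, ⨆ a, p (a, b)) := by
  refine neg_logb_sub_le_neg_logb_of_le_two_pow_mul (sum_iSup_pos hp (hsum ▸ one_pos)) ?_
  calc ∑ b, ⨆ a, p (a, b)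
      ≤ #(univ.filter fun b : β => 0 < ∑ a, p (a, b)) * ⨆ a, ∑ b, p (a, b) :=
        sum_iSup_le_card_mul_iSup_sum hp
    _ ≤ 2 ^ ℓ * ⨆ a, ∑ b, p (a, b) := by
        gcongr
        · exact Real.iSup_nonneg fun a => sum_nonneg fun b _ => hp (a, b)
        · exact_mod_cast hcard

/-- If a random variable B takes at most 2^ℓ possible values, then the
average conditional min-entropy of A given B (with joint distribution `p`) is at least
the min-entropy of A minus ℓ:  H̃∞(A|B) ≥ H∞(A) - ℓ, where
H̃∞(A|B) = -log₂(∑_b max_a Pr[A=a, B=b]) and H∞(A) = -log₂(max_a Pr[A=a]). -/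
theorem stmt_1 {α β : Type*} [Fintype α] [Fintype β] [Nonempty α] [Nonempty β]
    (p : α × β → ℝ) (hp : ∀ z, 0 ≤ p z) (hsum : ∑ z, p z = 1) (ℓ : ℕ)
    (hcard : (Finset.univ.filter (fun b : β => 0 < ∑ a, p (a, b))).card ≤ 2 ^ ℓ) :
    -Real.logb 2 (⨆ a, ∑ b, p (a, b)) - (ℓ : ℝ) ≤
      -Real.logb 2 (∑ b, ⨆ a, p (a, b)) :=
  stmt_1_general p hp hsum ℓ hcard
end

section
/- Fix a function A : F → F on a finite set F with no fixed points, and a subset T ⊆ F. Let B be the set of 2r-tuples y ∈ T^{2r} such that for each index i ∈ {1,…,2r} there exists an index j ≠ i with y_i = y_j or y_i = A(y_j). Then |B| ≤ (2r)^{4r} · |T|^r. -/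
open Finset
open scoped Classical

/-!
Values occurring at least twice in `y` are roots. A value occurring once is the `A`-image of
another value; choosing such a predecessor for each gives a fixed-point-free map on the values
occurring once, and following predecessors from any value reaches a root or runs into a cycle,
so one further root per cycle (of length at least two) suffices. Counting occurrences, there are
at most `r` roots, and every entry of `y` is `A^[n]` of a root with `n ≤ 2r`. So `y` is
determined by `r` roots in `T` together with a root index and an exponent for each of the `2r`
positions: at most `|T|^r (r · 4r)^{2r}` choices.
-/

open Function

section Iterate

variable {α : Type*} {f : α → α}

theorem exists_iterate_le_card_of_exists {P : α → Prop} {S : Finset α} {x : α}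
    (hS : ∀ y, ¬ P y → y ∈ S) (h : ∃ n, P (f^[n] x)) :
    ∃ n ≤ #S, P (f^[n] x) ∧ ∀ k < n, ¬ P (f^[k] x) := by
  refine ⟨Nat.find h, ?_, Nat.find_spec h, fun k hk => Nat.find_min h hk⟩
  set n := Nat.find h
  -- a repetition before time `n` would make the orbit reach `f^[n] x` earlier
  have hdistinct : ∀ i j, i < j → j < n → f^[i] x ≠ f^[j] x := by
    intro i j hij hjn heq
    apply Nat.find_min h (show n - j + i < n by omega)
    rw [iterate_add_apply, heq, ← iterate_add_apply, Nat.sub_add_cancel hjn.le]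
    exact Nat.find_spec h
  have hinj : Set.InjOn (fun k => f^[k] x) (range n) := by
    intro i hi j hj heq
    simp only [coe_range, Set.mem_Iio] at hi hj
    by_contra hne
    rcases Nat.lt_or_gt_of_ne hne with hlt | hlt
    exacts [hdistinct i j hlt hj heq, hdistinct j i hlt hi heq.symm]
  have := card_le_card_of_injOn _ (fun k hk => hS _ (Nat.find_min h (mem_range.1 hk))) hinj
  rwa [card_range] at this

theorem exists_isPeriodicPt_iterate_of_forall_mem {S : Finset α} {x : α}
    (h : ∀ n, f^[n] x ∈ S) : ∃ m c, 0 < c ∧ IsPeriodicPt f c (f^[m] x) := by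
  obtain ⟨i, -, j, -, hne, hij⟩ := exists_ne_map_eq_of_card_lt_of_maps_to
    (s := range (#S + 1)) (by simp) (f := fun n => f^[n] x) (fun n _ => h n)
  wlog hlt : i < j generalizing i j
  · exact this j i (Ne.symm hne) hij.symm (by omega)
  refine ⟨i, j - i, by omega, ?_⟩
  rw [IsPeriodicPt, IsFixedPt, ← iterate_add_apply, Nat.sub_add_cancel hlt.le]
  exact hij.symm

-- One point on each cycle of `f` inside `S` suffices, and these cycles have length at least two.
theorem exists_hitting_subset_of_forall_ne (f : α → α) (S : Finset α) (hf : ∀ x ∈ S, f x ≠ x) :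
    ∃ R ⊆ S, 2 * #R ≤ #S ∧ ∀ x ∈ S, ∃ n, f^[n] x ∈ R ∨ f^[n] x ∉ S := by
  induction S using Finset.strongInduction with
  | H S ih =>
  by_cases hleave : ∀ x ∈ S, ∃ n, f^[n] x ∉ S
  · exact ⟨∅, empty_subset _, by simp, fun x hx => (hleave x hx).imp fun _ => Or.inr⟩
  push Not at hleave
  obtain ⟨x, -, hstay⟩ := hleave
  obtain ⟨m, c, hc, hper⟩ := exists_isPeriodicPt_iterate_of_forall_mem hstay
  set u := f^[m] x
  have huS : ∀ k, f^[k] u ∈ S := fun k => by rw [← iterate_add_apply]; exact hstay _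
  set C := (range c).image (f^[·] u)
  have hCS : C ⊆ S := by
    intro y hy
    obtain ⟨k, -, rfl⟩ := mem_image.1 hy
    exact huS k
  have huC : u ∈ C := mem_image.2 ⟨0, mem_range.2 hc, rfl⟩
  have hreturn : ∀ y ∈ C, ∃ n, f^[n] y = u := by
    intro y hy
    obtain ⟨k, hk, rfl⟩ := mem_image.1 hy
    refine ⟨c - k, ?_⟩
    rw [← iterate_add_apply, Nat.sub_add_cancel (mem_range.1 hk).le]
    exact hper
  have hC2 : 2 ≤ #C := by
    have hc1 : 1 < c := by
      by_contra hc1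
      obtain rfl : c = 1 := by omega
      exact hf u (huS 0) hper
    calc 2 = #{u, f u} := (card_pair (hf u (huS 0)).symm).symm
      _ ≤ #C := card_le_card (insert_subset huC
          (singleton_subset_iff.2 (mem_image.2 ⟨1, mem_range.2 hc1, rfl⟩)))
  obtain ⟨R, hRS, hRcard, hR⟩ :=
    ih (S \ C) (sdiff_ssubset hCS ⟨u, huC⟩) fun y hy => hf y (mem_sdiff.1 hy).1
  refine ⟨insert u R, insert_subset (huS 0) (hRS.trans sdiff_subset), ?_, ?_⟩
  · have := card_insert_le u R
    rw [card_sdiff_of_subset hCS] at hRcard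
    have := card_le_card hCS
    omega
  have hC : ∀ y ∈ C, ∃ n, f^[n] y ∈ insert u R := fun y hy =>
    (hreturn y hy).imp fun _ hn => by rw [hn]; exact mem_insert_self u R
  intro y hy
  by_cases hyC : y ∈ C
  · exact (hC y hyC).imp fun _ => Or.inl
  obtain ⟨n, hn | hn⟩ := hR y (mem_sdiff.2 ⟨hy, hyC⟩)
  · exact ⟨n, Or.inl (mem_insert_of_mem hn)⟩
  by_cases hnC : f^[n] y ∈ C
  · obtain ⟨k, hk⟩ := hC _ hnC
    exact ⟨k + n, Or.inl (by rwa [iterate_add_apply])⟩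
  · exact ⟨n, Or.inr fun hnS => hn (mem_sdiff.2 ⟨hnS, hnC⟩)⟩

theorem mem_and_iterate_iterate_eq_of_section {g p : α → α} {S V : Set α}
    (hp : ∀ x ∈ S, p x ∈ V ∧ g (p x) = x) {x : α} (hx : x ∈ V) :
    ∀ {n}, (∀ k < n, p^[k] x ∈ S) → p^[n] x ∈ V ∧ g^[n] (p^[n] x) = x
  | 0, _ => ⟨hx, rfl⟩
  | n + 1, h => by
    obtain ⟨-, ih⟩ :=
      mem_and_iterate_iterate_eq_of_section (n := n) hp hx fun k hk => h k (by omega)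
    obtain ⟨hV, hg⟩ := hp _ (h n n.lt_succ_self)
    rw [iterate_succ_apply', iterate_succ_apply, hg]
    exact ⟨hV, ih⟩

end Iterate

theorem two_mul_card_filter_add_card_filter_le {ι β : Type*} [Fintype ι] [DecidableEq β]
    (y : ι → β) :
    2 * #{v ∈ univ.image y | 2 ≤ #{i | y i = v}} +
      #{v ∈ univ.image y | ¬ 2 ≤ #{i | y i = v}} ≤ Fintype.card ι := by
  have hsum := card_eq_sum_card_image y univ
  rw [← sum_filter_add_sum_filter_not _ (fun v => 2 ≤ #{i | y i = v})] at hsum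
  have hmany := card_nsmul_le_sum {v ∈ univ.image y | 2 ≤ #{i | y i = v}} _ 2
    fun v hv => (mem_filter.1 hv).2
  have hone := card_nsmul_le_sum {v ∈ univ.image y | ¬ 2 ≤ #{i | y i = v}}
    (fun v => #{i | y i = v}) 1 fun v hv => by
      obtain ⟨i, -, rfl⟩ := mem_image.1 (mem_filter.1 hv).1
      exact card_pos.2 ⟨i, by simp⟩
  simp only [smul_eq_mul, mul_one, card_univ] at hmany hone hsum
  omega

theorem exists_iterate_generating_finset {ι F : Type*} [Fintype ι] [DecidableEq F]
    (A : F → F) (hA : ∀ x, A x ≠ x) (y : ι → F)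
    (hy : ∀ i, ∃ j, j ≠ i ∧ (y i = y j ∨ y i = A (y j))) :
    ∃ R ⊆ univ.image y, 2 * #R ≤ Fintype.card ι ∧
      ∀ i, ∃ u ∈ R, ∃ n ≤ Fintype.card ι, A^[n] u = y i := by
  set V := univ.image y
  set M := {v ∈ V | 2 ≤ #{i | y i = v}}
  set S := {v ∈ V | ¬ 2 ≤ #{i | y i = v}}
  have hcard : 2 * #M + #S ≤ Fintype.card ι := two_mul_card_filter_add_card_filter_le y
  have hpred : ∀ v ∈ S, ∃ w ∈ V, A w = v := by
    intro v hv
    obtain ⟨hvV, hmult⟩ := mem_filter.1 hv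
    obtain ⟨i, -, rfl⟩ := mem_image.1 hvV
    obtain ⟨j, hji, hj | hj⟩ := hy i
    · refine absurd ?_ hmult
      calc 2 = #{j, i} := (card_pair hji).symm
        _ ≤ _ := card_le_card fun k hk => by aesop
    · exact ⟨y j, mem_image_of_mem y (mem_univ j), hj.symm⟩
  choose! p hpV hpA using hpred
  obtain ⟨R₀, hR₀S, hR₀card, hR₀⟩ := exists_hitting_subset_of_forall_ne p S
    fun v hv hpv => hA v (by simpa [hpv] using hpA v hv)
  refine ⟨M ∪ R₀, union_subset (filter_subset _ _) (hR₀S.trans (filter_subset _ _)), ?_,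
    fun i => ?_⟩
  · have := card_union_le M R₀
    omega
  have hyV : y i ∈ V := mem_image_of_mem y (mem_univ i)
  obtain ⟨n, hnS, hhit, hbefore⟩ := exists_iterate_le_card_of_exists (f := p)
    (P := fun x => x ∈ R₀ ∨ x ∉ S) (fun x hx => by tauto)
    (by by_cases h : y i ∈ S; exacts [hR₀ _ h, ⟨0, Or.inr h⟩])
  obtain ⟨huV, hu⟩ := mem_and_iterate_iterate_eq_of_section (S := S) (V := V)
    (fun x hx => ⟨hpV x hx, hpA x hx⟩) hyV
    fun k hk => by simpa using (not_or.1 (hbefore k hk)).2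
  refine ⟨p^[n] (y i), ?_, n, by omega, hu⟩
  rcases hhit with h | h
  · exact mem_union_right _ h
  · simp only [S, mem_filter, not_and, not_not] at h
    exact mem_union_left _ (mem_filter.2 ⟨huV, h huV⟩)

theorem exists_fin_range_between {α : Type*} {R T : Finset α} {a : α} (hRT : R ⊆ T) (ha : a ∈ T)
    {r : ℕ} (hr : #R ≤ r) : ∃ ρ : Fin r → α, (∀ k, ρ k ∈ T) ∧ ∀ u ∈ R, ∃ k, ρ k = u := by
  refine ⟨fun k => if h : (k : ℕ) < #R then R.equivFin.symm ⟨k, h⟩ else a, fun k => ?_,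
    fun u hu => ⟨Fin.castLE hr (R.equivFin ⟨u, hu⟩), by simp⟩⟩
  dsimp only
  split_ifs
  exacts [hRT (Subtype.property _), ha]

/-- Fix a fixed-point-free function A : F → F on a finite set F and
T ⊆ F. Let B be the set of 2r-tuples y ∈ T^{2r} such that for each index i there is an
index j ≠ i with y_i = y_j or y_i = A(y_j). Then |B| ≤ (2r)^{4r} · |T|^r. -/
theorem stmt_11 {F : Type*} [Fintype F] [DecidableEq F]
    (A : F → F) (hA : ∀ y, A y ≠ y) (T : Finset F) (r : ℕ) (hr : 1 ≤ r) :
    (Finset.univ.filter (fun y : Fin (2 * r) → F =>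
        (∀ i, y i ∈ T) ∧
        ∀ i, ∃ j, j ≠ i ∧ (y i = y j ∨ y i = A (y j)))).card ≤
      (2 * r) ^ (4 * r) * T.card ^ r := by
  set codes := (Fintype.piFinset fun _ : Fin r => T) ×ˢ
    (univ : Finset (Fin (2 * r) → Fin r × Fin (4 * r)))
  calc _ ≤ #(codes.image fun c i => A^[(c.2 i).2] (c.1 (c.2 i).1)) := card_le_card ?_
    _ ≤ #codes := card_image_le
    _ = (2 * r) ^ (4 * r) * #T ^ r := by
      simp only [codes, card_product, Fintype.card_piFinset_const, card_univ, Fintype.card_fun,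
        Fintype.card_prod, Fintype.card_fin]
      rw [show r * (4 * r) = (2 * r) ^ 2 by ring, ← pow_mul]
      ring
  intro y hy
  obtain ⟨hyT, hy⟩ := (mem_filter.1 hy).2
  obtain ⟨R, hRy, hRcard, hR⟩ := exists_iterate_generating_finset A hA y hy
  rw [Fintype.card_fin] at hRcard hR
  obtain ⟨ρ, hρT, hρ⟩ := exists_fin_range_between (r := r)
    (hRy.trans (image_subset_iff.2 fun i _ => hyT i)) (hyT ⟨0, by omega⟩) (by omega)
  have hcode : ∀ i, ∃ c : Fin r × Fin (4 * r), A^[c.2] (ρ c.1) = y i := by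
    intro i
    obtain ⟨u, hu, n, hn, hnu⟩ := hR i
    obtain ⟨k, rfl⟩ := hρ u hu
    exact ⟨(k, ⟨n, by omega⟩), hnu⟩
  choose c hc using hcode
  exact mem_image.2 ⟨(ρ, c), mem_product.2 ⟨Fintype.mem_piFinset.2 hρT, mem_univ _⟩, funext hc⟩
end

section
/- For any statistical security: given a joint distribution (R, E) of a MAC key R ∈ {0,1}^{2v} and side information E, the polynomial-evaluation one-time MAC with tag length v for messages of length d satisfies: for all attackers A₁, A₂, the probability that A₂, given E and the tag of the message W = A₁(E), outputs a pair (W', T') with W' ≠ W and T' a valid tag of W', is at most ⌈d/v⌉ · 2^{v - H̃_∞(R|E)}. -/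
open Finset
open scoped Classical

/-!
For a fixed message `w` and a fixed observed tag `τ`, a key `(r₁, r₂)` on which the attacker's
answer `(w', T')` is a forgery satisfies `∑ (w'ᵢ - wᵢ) r₁^(i+1) = T' - τ`, a nonzero polynomial
equation of degree at most `t` in `r₁`, while `r₂` is then determined by `τ`. Hence at most
`t · |K|` keys lead to a forgery, whatever the side information `e`; weighting each by at most
`max_r p(r, e)` and summing over `e` gives the bound.
-/

section Forgery

variable {K : Type*} [CommRing K] [IsDomain K] [Fintype K] {t : ℕ}

def polyMac (r : K × K) (w : Fin t → K) : K :=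
  r.2 + ∑ i, w i * r.1 ^ ((i : ℕ) + 1)

lemma card_filter_sum_mul_pow_succ_eq_le {c : Fin t → K} (hc : c ≠ 0) (a : K) :
    #{x | ∑ i, c i * x ^ ((i : ℕ) + 1) = a} ≤ t := by
  open Polynomial in
  let q : K[X] := ∑ i, C (c i) * X ^ ((i : ℕ) + 1) - C a
  have hq_eval (x : K) : q.eval x = ∑ i, c i * x ^ ((i : ℕ) + 1) - a := by
    simp [q, eval_finsetSum]
  have hq_coeff (j : Fin t) : q.coeff ((j : ℕ) + 1) = c j := by
    simp [q, finsetSum_coeff, Fin.val_inj]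
  have hq_ne : q ≠ 0 := by
    obtain ⟨j, hj⟩ := Function.ne_iff.mp hc
    exact fun h ↦ hj (by rw [← hq_coeff j, h, coeff_zero, Pi.zero_apply])
  have hq_deg : q.natDegree ≤ t := by
    rw [natDegree_sub_C]
    exact natDegree_sum_le_of_forall_le _ _ fun i _ ↦
      (natDegree_C_mul_X_pow_le _ _).trans i.isLt
  calc #{x | ∑ i, c i * x ^ ((i : ℕ) + 1) = a}
      ≤ q.natDegree := card_le_degree_of_subset_roots fun x hx ↦ by
        simp_all [mem_roots hq_ne]
    _ ≤ t := hq_deg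

/-- The attacker, who knows the side information, is modelled by the map `A` from the observed
tag of `w` to the pair `(w', T')` it outputs. -/
def Forges (w : Fin t → K) (A : K → (Fin t → K) × K) (r : K × K) : Prop :=
  (A (polyMac r w)).1 ≠ w ∧ polyMac r (A (polyMac r w)).1 = (A (polyMac r w)).2

lemma card_filter_forges_polyMac_eq_le (w : Fin t → K) (A : K → (Fin t → K) × K) (τ : K) :
    #{r | Forges w A r ∧ polyMac r w = τ} ≤ t := by
  by_cases hA : (A τ).1 = w
  · refine (card_eq_zero.mpr (filter_eq_empty_iff.mpr ?_)).trans_le (Nat.zero_le t)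
    rintro r - ⟨⟨hne, -⟩, rfl⟩
    exact hne hA
  -- subtracting the two tag equations eliminates `r₂`
  calc #{r | Forges w A r ∧ polyMac r w = τ}
      ≤ #{x | ∑ i, ((A τ).1 i - w i) * x ^ ((i : ℕ) + 1) = (A τ).2 - τ} := by
        refine card_le_card_of_injOn Prod.fst ?_ ?_
        · intro r hr
          rw [mem_coe, mem_filter] at hr
          obtain ⟨-, ⟨-, hforge⟩, rfl⟩ := hr
          rw [mem_coe, mem_filter]
          refine ⟨mem_univ _, ?_⟩
          simp only [polyMac, sub_mul, sum_sub_distrib] at hforge ⊢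
          linear_combination hforge
        · intro r hr r' hr' h
          rw [mem_coe, mem_filter] at hr hr'
          have h₂ : r.2 = r'.2 := by
            have := hr.2.2.trans hr'.2.2.symm
            simp only [polyMac, h] at this
            exact add_right_cancel this
          exact Prod.ext h h₂
    _ ≤ t := card_filter_sum_mul_pow_succ_eq_le (c := (A τ).1 - w) (sub_ne_zero.mpr hA) _

lemma card_filter_forges_le (w : Fin t → K) (A : K → (Fin t → K) × K) :
    #{r | Forges w A r} ≤ t * Fintype.card K := by
  refine card_le_mul_card_image_of_maps_to (f := (polyMac · w)) (fun _ _ ↦ mem_univ _) t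
    fun τ _ ↦ ?_
  simpa only [filter_filter] using card_filter_forges_polyMac_eq_le w A τ

end Forgery

lemma sum_filter_le_mul_sum_iSup {R E : Type*} [Fintype R] [Nonempty R] [Fintype E]
    (p : R × E → ℝ) (hp : ∀ z, 0 ≤ p z) (S : R × E → Prop) (n : ℕ)
    (hS : ∀ e, #{r | S (r, e)} ≤ n) :
    ∑ z with S z, p z ≤ n * ∑ e, ⨆ r, p (r, e) := by
  have hbdd (e : E) : BddAbove (Set.range fun r ↦ p (r, e)) := (Set.finite_range _).bddAbove
  have hsup_nonneg (e : E) : 0 ≤ ⨆ r, p (r, e) :=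
    (hp _).trans (le_ciSup (hbdd e) (Classical.arbitrary R))
  rw [sum_filter, Fintype.sum_prod_type_right, mul_sum]
  refine sum_le_sum fun e _ ↦ ?_
  calc ∑ r, (if S (r, e) then p (r, e) else 0)
      = ∑ r with S (r, e), p (r, e) := (sum_filter _ _).symm
    _ ≤ #{r | S (r, e)} • ⨆ r, p (r, e) :=
        sum_le_card_nsmul _ _ _ fun r _ ↦ le_ciSup (hbdd e) r
    _ ≤ n * ⨆ r, p (r, e) := by
        rw [nsmul_eq_mul]
        exact mul_le_mul_of_nonneg_right (by exact_mod_cast hS e) (hsup_nonneg e)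

theorem stmt_16_general {K E : Type*} [Field K] [Fintype K] [Fintype E]
    (v : ℕ) (hK : Fintype.card K = 2 ^ v)
    (t : ℕ)
    (p : (K × K) × E → ℝ) (hp0 : ∀ z, 0 ≤ p z)
    (A₁ : E → (Fin t → K)) (A₂ : K × E → (Fin t → K) × K) :
    (∑ z ∈ Finset.univ.filter (fun z : (K × K) × E =>
        (A₂ (z.1.2 + ∑ i, A₁ z.2 i * z.1.1 ^ ((i : ℕ) + 1), z.2)).1 ≠ A₁ z.2 ∧
        z.1.2 + ∑ i, (A₂ (z.1.2 + ∑ i, A₁ z.2 i * z.1.1 ^ ((i : ℕ) + 1), z.2)).1 i *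
            z.1.1 ^ ((i : ℕ) + 1) =
          (A₂ (z.1.2 + ∑ i, A₁ z.2 i * z.1.1 ^ ((i : ℕ) + 1), z.2)).2), p z) ≤
      (t : ℝ) * (2 : ℝ) ^ v * ∑ e, ⨆ r : K × K, p (r, e) := by
  have h := sum_filter_le_mul_sum_iSup p hp0 (fun z ↦ Forges (A₁ z.2) (fun τ ↦ A₂ (τ, z.2)) z.1)
    (t * Fintype.card K) fun e ↦ card_filter_forges_le (A₁ e) fun τ ↦ A₂ (τ, e)
  rw [hK, Nat.cast_mul, Nat.cast_pow, Nat.cast_ofNat] at h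
  convert h using 3
  rfl

/-- The polynomial-evaluation one-time MAC with key R = (r₁, r₂) over a
field K with |K| = 2^v, MAC_R(w) = r₂ + ∑_i w_i·r₁^i for messages w ∈ K^t (t = ⌈d/v⌉),
satisfies: for any joint distribution p of the key R and side information E, and all
attackers A₁, A₂, the probability that A₂, given E and the tag of W = A₁(E), outputs
(W', T') with W' ≠ W and T' a valid tag of W', is at most
⌈d/v⌉ · 2^{v - H̃∞(R|E)} = t · |K| · ∑_e max_r p(r,e). -/
theorem stmt_16 {K E : Type*} [Field K] [Fintype K] [Fintype E] [Nonempty E]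
    (v : ℕ) (hK : Fintype.card K = 2 ^ v)
    (t : ℕ) (ht : 0 < t)
    (p : (K × K) × E → ℝ) (hp0 : ∀ z, 0 ≤ p z) (hp1 : ∑ z, p z = 1)
    (A₁ : E → (Fin t → K)) (A₂ : K × E → (Fin t → K) × K) :
    (∑ z ∈ Finset.univ.filter (fun z : (K × K) × E =>
        (A₂ (z.1.2 + ∑ i, A₁ z.2 i * z.1.1 ^ ((i : ℕ) + 1), z.2)).1 ≠ A₁ z.2 ∧
        z.1.2 + ∑ i, (A₂ (z.1.2 + ∑ i, A₁ z.2 i * z.1.1 ^ ((i : ℕ) + 1), z.2)).1 i *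
            z.1.1 ^ ((i : ℕ) + 1) =
          (A₂ (z.1.2 + ∑ i, A₁ z.2 i * z.1.1 ^ ((i : ℕ) + 1), z.2)).2), p z) ≤
      (t : ℝ) * (2 : ℝ) ^ v * ∑ e, ⨆ r : K × K, p (r, e) :=
  stmt_16_general v hK t p hp0 A₁ A₂
end
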